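/- Let (M,τ) be a subdirectly irreducible state BL-algebra. Then Ker(τ) = {a : τ(a) = 1} and the image τ(M) have the disjunction property: for x ∈ Ker(τ) and y ∈ τ(M), if x ∨ y = 1 then x = 1 or y = 1. -/

import Mathlib

/-- A BL-algebra: a bounded prelinear divisible integral commutative residuated
lattice. The monoid unit `1` coincides with the top element. -/
class BLAlgebra (M : Type*) extends Lattice M, CommMonoid M, BoundedOrder M where
  residuum : M → M → M
  one_eq_top : (1 : M) = ⊤
  adjoint : ∀ a b c : M, c ≤ residuum a b ↔ a * c ≤ b
  div : ∀ a b : M, a ⊓ b = a * residuum a b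
  prelin : ∀ a b : M, residuum a b ⊔ residuum b a = ⊤

/-- A state-operator on a BL-algebra. -/
def IsStateOperator {M : Type*} [BLAlgebra M] (τ : M → M) : Prop :=
  τ ⊥ = ⊥ ∧
  (∀ x y, τ (BLAlgebra.residuum x y) = BLAlgebra.residuum (τ x) (τ (x ⊓ y))) ∧
  (∀ x y, τ (x * y) = τ x * τ (BLAlgebra.residuum x (x * y))) ∧
  (∀ x y, τ (τ x * τ y) = τ x * τ y) ∧
  (∀ x y, τ (BLAlgebra.residuum (τ x) (τ y)) = BLAlgebra.residuum (τ x) (τ y))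

/-- `F` is a (BL-)filter of the subalgebra with underlying set `S`. -/
def IsFilterOn {M : Type*} [BLAlgebra M] (S F : Set M) : Prop :=
  F ⊆ S ∧ (1 : M) ∈ F ∧ (∀ x ∈ F, ∀ y ∈ F, x * y ∈ F) ∧
    ∀ x ∈ F, ∀ y ∈ S, x ≤ y → y ∈ F

/-!
If `w ≤ τ w` (e.g. `w` in `Ker τ`, or `w ∈ τ(M)`), then the filter generated by `w` is a
`τ`-filter, so in a subdirectly irreducible algebra it contains the monolith as soon as
`w ≠ 1`. But `x ⊔ y = 1` forces `xⁿ ⊔ yᵐ = 1`, so the filters generated by `x` and `y`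
meet only in `1`; they cannot both contain the monolith (the least nontrivial `τ`-filter).
-/

namespace BLAlgebra

variable {M : Type*} [BLAlgebra M]

lemma le_one (a : M) : a ≤ 1 := one_eq_top (M := M) ▸ le_top

instance isOrderedMonoid : IsOrderedMonoid M where
  mul_le_mul_left a b hab c := by
    rw [mul_comm a, mul_comm b, ← adjoint]
    exact hab.trans ((adjoint c (c * b) b).2 le_rfl)

protected lemma mul_sup (a b c : M) : a * (b ⊔ c) = a * b ⊔ a * c := by
  refine le_antisymm ?_
    (sup_le (mul_le_mul_right le_sup_left a) (mul_le_mul_right le_sup_right a))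
  rw [← adjoint]
  exact sup_le ((adjoint _ _ _).2 le_sup_left) ((adjoint _ _ _).2 le_sup_right)

protected lemma sup_mul (a b c : M) : (a ⊔ b) * c = a * c ⊔ b * c := by
  simp only [mul_comm _ c, BLAlgebra.mul_sup]

lemma pow_sup_eq_one {x y : M} (h : x ⊔ y = 1) (n : ℕ) : x ^ n ⊔ y = 1 := by
  induction n with
  | zero => exact le_antisymm (le_one _) (pow_zero x ▸ le_sup_left)
  | succ n ih =>
    refine le_antisymm (le_one _) ?_
    calc (1 : M) = (x ^ n ⊔ y) * (x ⊔ y) := by rw [ih, h, mul_one]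
      _ = x ^ (n + 1) ⊔ (x ^ n * y ⊔ (y * x ⊔ y * y)) := by
        rw [BLAlgebra.sup_mul, BLAlgebra.mul_sup, BLAlgebra.mul_sup, pow_succ, sup_assoc]
      _ ≤ x ^ (n + 1) ⊔ y := by
        gcongr
        exact sup_le (mul_le_of_le_one_left' (le_one _))
          (sup_le (mul_le_of_le_one_right' (le_one _)) (mul_le_of_le_one_right' (le_one _)))

lemma pow_sup_pow_eq_one {x y : M} (h : x ⊔ y = 1) (n m : ℕ) : x ^ n ⊔ y ^ m = 1 := by
  have hxn : y ⊔ x ^ n = 1 := sup_comm (x ^ n) y ▸ pow_sup_eq_one h n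
  exact sup_comm (y ^ m) (x ^ n) ▸ pow_sup_eq_one hxn m

lemma residuum_self (a : M) : residuum a a = 1 :=
  le_antisymm (le_one _) ((adjoint _ _ _).2 (mul_one a).le)

end BLAlgebra

open BLAlgebra

namespace IsStateOperator

variable {M : Type*} [BLAlgebra M] {τ : M → M}

lemma map_one (hτ : IsStateOperator τ) : τ 1 = 1 := by
  simpa only [residuum_self, inf_idem] using hτ.2.1 1 1

lemma map_map (hτ : IsStateOperator τ) (x : M) : τ (τ x) = τ x := by
  simpa only [hτ.map_one, mul_one] using hτ.2.2.2.1 x 1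

lemma monotone (hτ : IsStateOperator τ) : Monotone τ := by
  intro a b hab
  have hb : a = b * residuum b a := by rw [← BLAlgebra.div, inf_eq_right.2 hab]
  calc τ a = τ b * τ (residuum b (b * residuum b a)) := by rw [← hτ.2.2.1, ← hb]
    _ ≤ τ b := mul_le_of_le_one_right' (le_one _)

lemma mul_le_map_mul (hτ : IsStateOperator τ) (x y : M) : τ x * τ y ≤ τ (x * y) := by
  rw [hτ.2.2.1 x y]
  exact mul_le_mul_right (hτ.monotone ((adjoint _ _ _).2 le_rfl)) _

lemma pow_le_map_pow (hτ : IsStateOperator τ) (x : M) (n : ℕ) : τ x ^ n ≤ τ (x ^ n) := by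
  induction n with
  | zero => simp only [pow_zero, hτ.map_one, le_refl]
  | succ n ih =>
    rw [pow_succ, pow_succ]
    exact (mul_le_mul_left ih _).trans (hτ.mul_le_map_mul _ x)

end IsStateOperator

namespace BLAlgebra

variable {M : Type*} [BLAlgebra M]

def genFilter (w : M) : Set M := {a | ∃ n : ℕ, w ^ n ≤ a}

lemma self_mem_genFilter (w : M) : w ∈ genFilter w := ⟨1, (pow_one w).le⟩

lemma isFilterOn_genFilter (w : M) : IsFilterOn Set.univ (genFilter w) := by
  refine ⟨Set.subset_univ _, ⟨0, le_one _⟩, ?_, ?_⟩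
  · rintro a ⟨n, hn⟩ b ⟨m, hm⟩
    exact ⟨n + m, pow_add w n m ▸ mul_le_mul' hn hm⟩
  · rintro a ⟨n, hn⟩ b - hab
    exact ⟨n, hn.trans hab⟩

lemma image_genFilter_subset {τ : M → M} (hτ : IsStateOperator τ) {w : M} (hw : w ≤ τ w) :
    τ '' genFilter w ⊆ genFilter w := by
  rintro _ ⟨a, ⟨n, hn⟩, rfl⟩
  exact ⟨n, (pow_le_pow_left' hw n).trans ((hτ.pow_le_map_pow w n).trans (hτ.monotone hn))⟩

lemma genFilter_inter_genFilter_subset {x y : M} (h : x ⊔ y = 1) :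
    genFilter x ∩ genFilter y ⊆ {1} := by
  rintro a ⟨⟨n, hn⟩, ⟨m, hm⟩⟩
  exact le_antisymm (le_one a) (pow_sup_pow_eq_one h n m ▸ sup_le hn hm)

end BLAlgebra

/-- In a subdirectly irreducible state BL-algebra, Ker(τ) and τ(M) have the
disjunction property. -/
theorem stmt14 {M : Type*} [BLAlgebra M] (τ : M → M) (hτ : IsStateOperator τ)
    (hSI : ∃ F : Set M, IsFilterOn Set.univ F ∧ τ '' F ⊆ F ∧ F ≠ {1} ∧
      ∀ G : Set M, IsFilterOn Set.univ G → τ '' G ⊆ G → G ≠ {1} → F ⊆ G) :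
    ∀ x, τ x = 1 → ∀ y ∈ Set.range τ, x ⊔ y = 1 → x = 1 ∨ y = 1 := by
  rintro x hx _ ⟨z, rfl⟩ hxz
  by_contra! hne
  obtain ⟨F, hF, -, hF1, hmin⟩ := hSI
  have monolith_le : ∀ w, w ≤ τ w → w ≠ 1 → F ⊆ genFilter w := fun w hw hw1 =>
    hmin _ (isFilterOn_genFilter w) (image_genFilter_subset hτ hw)
      fun h => hw1 (Set.mem_singleton_iff.1 (h ▸ self_mem_genFilter w))
  obtain ⟨a, haF, ha1⟩ := ((Set.nontrivial_iff_ne_singleton hF.2.1).2 hF1).exists_ne 1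
  exact ha1 (genFilter_inter_genFilter_subset hxz
    ⟨monolith_le x (hx ▸ le_one x) hne.1 haF, monolith_le _ (hτ.map_map z).ge hne.2 haF⟩)
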